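/- Linear independence of factorial Schur polynomials: Fix n ≥ 1. Regard each factorial Schur polynomial s_λ(X;Y), for λ a partition with at most n parts (computed in the grid with m(λ) = n + λ_1 columns), as an element of the polynomial ring ℤ[x_1,...,x_n, y_1, y_2, ...]. If (p_λ)_λ is a family of polynomials in ℤ[y_1, y_2, ...], indexed by partitions λ with at most n parts and all but finitely many zero, such that Σ_λ p_λ · s_λ(X;Y) = 0, then p_λ = 0 for every λ. -/

import Mathlib

/-!
Common definitions: partitions, edge-labeled tableaux (Thomas–Yong), reading
words, the polytope conditions (A)–(F), plus diagrams and (factorial) Schur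
polynomials, following Adve–Robichaux–Yong,
"Vanishing of Littlewood-Richardson polynomials is in P".
-/

/-- A partition: a weakly decreasing, eventually-zero sequence of natural numbers.
Internally `toFun` is 0-indexed: `toFun (i-1)` is the `i`-th part `λ_i`. -/
structure NatPartition where
  toFun : ℕ → ℕ
  antitone' : ∀ ⦃i j : ℕ⦄, i ≤ j → toFun j ≤ toFun i
  eventually_zero' : ∃ N, ∀ i, N ≤ i → toFun i = 0

namespace NatPartition

/-- The `i`-th part `λ_i` (1-indexed: `part 1` is the first part). -/
def part (p : NatPartition) (i : ℕ) : ℕ := p.toFun (i - 1)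

/-- `ℓ(λ)`: the number of nonzero parts. -/
noncomputable def len (p : NatPartition) : ℕ := Set.ncard {i : ℕ | p.toFun i ≠ 0}

/-- `|λ| = Σ_i λ_i`. -/
noncomputable def size (p : NatPartition) : ℕ := ∑ᶠ i, p.toFun i

/-- The dilated partition `Nλ = (Nλ_1, Nλ_2, …)`. -/
def smul (N : ℕ) (p : NatPartition) : NatPartition where
  toFun i := N * p.toFun i
  antitone' _ _ h := Nat.mul_le_mul le_rfl (p.antitone' h)
  eventually_zero' := by
    obtain ⟨M, hM⟩ := p.eventually_zero'
    exact ⟨M, fun i hi => by show N * p.toFun i = 0; rw [hM i hi, Nat.mul_zero]⟩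

/-- `λ ⊆ ν`, i.e. `λ_i ≤ ν_i` for all `i`. -/
def Subset (lam nu : NatPartition) : Prop := ∀ i, lam.part i ≤ nu.part i

end NatPartition

/-- `(i,j)` (1-indexed, matrix convention) is a box of the skew shape `ν/λ`,
i.e. `λ_i < j ≤ ν_i`. -/
def IsBox (lam nu : NatPartition) (i j : ℕ) : Prop :=
  1 ≤ i ∧ lam.part i < j ∧ j ≤ nu.part i

instance (lam nu : NatPartition) (i j : ℕ) : Decidable (IsBox lam nu i j) :=
  inferInstanceAs (Decidable (_ ∧ _ ∧ _))

/-- `(i+1/2, j)` is a horizontal edge position of the skew shape `ν/λ`: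
`1 ≤ j ≤ ν_i` and `j > λ_{i+1}`. -/
def IsEdge (lam nu : NatPartition) (i j : ℕ) : Prop :=
  1 ≤ i ∧ 1 ≤ j ∧ j ≤ nu.part i ∧ lam.part (i + 1) < j

/-- An edge-labeled tableau of shape `ν/λ` and content `μ` (Thomas–Yong).
`box i j` is the label of box `(i,j)` (`0` outside the shape), and
`edge i j` is the finite set of labels on the edge `(i+1/2, j)`
(empty outside the shape). All labels are positive integers. -/
structure EdgeTableau (lam mu nu : NatPartition) where
  subset : NatPartition.Subset lam nu
  box : ℕ → ℕ → ℕ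
  edge : ℕ → ℕ → Finset ℕ
  box_pos : ∀ i j, IsBox lam nu i j → 1 ≤ box i j
  box_eq_zero : ∀ i j, ¬ IsBox lam nu i j → box i j = 0
  edge_pos : ∀ i j, ∀ e ∈ edge i j, 1 ≤ e
  edge_eq_empty : ∀ i j, ¬ IsEdge lam nu i j → edge i j = ∅
  row_weak : ∀ i j, IsBox lam nu i j → IsBox lam nu i (j+1) → box i j ≤ box i (j+1)
  col_strict : ∀ i j, IsBox lam nu i j → IsBox lam nu (i+1) j → box i j < box (i+1) j
  edge_gt_box : ∀ i j, IsBox lam nu i j → ∀ e ∈ edge i j, box i j < e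
  edge_lt_box : ∀ i j, IsBox lam nu (i+1) j → ∀ e ∈ edge i j, e < box (i+1) j
  not_too_high : ∀ i j, ∀ e ∈ edge i j, e ≤ i
  content : ∀ k, 1 ≤ k →
    Set.ncard {q : ℕ × ℕ | box q.1 q.2 = k} + Set.ncard {q : ℕ × ℕ | k ∈ edge q.1 q.2}
      = mu.part k

namespace EdgeTableau

variable {lam mu nu : NatPartition}

/-- The (one-letter or empty) word contributed by the box `(i,j)`. -/
def boxWord (T : EdgeTableau lam mu nu) (i j : ℕ) : List ℕ :=
  if IsBox lam nu i j then [T.box i j] else []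

/-- The word contributed by the edge `(i+1/2, j)`, read in increasing order. -/
def edgeWord (T : EdgeTableau lam mu nu) (i j : ℕ) : List ℕ :=
  (T.edge i j).sort (· ≤ ·)

/-- The column reading word `w_c(T)`: columns right to left, each column top to
bottom, alternating the box label of row `i` with the edge set of row `i+1/2`. -/
noncomputable def wc (T : EdgeTableau lam mu nu) : List ℕ :=
  ((List.range (nu.part 1)).reverse).flatMap fun j0 =>
    (List.range nu.len).flatMap fun i0 =>
      T.boxWord (i0+1) (j0+1) ++ T.edgeWord (i0+1) (j0+1)

/-- The row reading word `w_r(T)`: for `i = 1, 2, …`, the boxes of row `i`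
right to left, then the edge sets of row `i+1/2` right to left. -/
noncomputable def wr (T : EdgeTableau lam mu nu) : List ℕ :=
  (List.range nu.len).flatMap fun i0 =>
    (((List.range (nu.part 1)).reverse).flatMap fun j0 => T.boxWord (i0+1) (j0+1)) ++
    (((List.range (nu.part 1)).reverse).flatMap fun j0 => T.edgeWord (i0+1) (j0+1))

end EdgeTableau

/-- A word is lattice if, for every `k ≥ 1`, every prefix contains at least as
many letters `k` as letters `k+1`. -/
def IsLatticeWord (w : List ℕ) : Prop :=
  ∀ k, 1 ≤ k → ∀ t, (w.take t).count (k+1) ≤ (w.take t).count k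

/-- `EdgeTab(λ,μ,ν)`: edge-labeled tableaux of shape `ν/λ` and content `μ`
whose column reading word is lattice. -/
def EdgeTab (lam mu nu : NatPartition) : Set (EdgeTableau lam mu nu) :=
  {T | IsLatticeWord T.wc}

/-! ### Positions and reading-order prefixes -/

/-- A (horizontal) position of a tableau: a box `(i,j)` or an edge `(i+1/2, j)`. -/
inductive HPos
  | box (i j : ℕ)
  | edge (i j : ℕ)

namespace HPos

/-- Twice the (half-integer) row index: `2i` for a box in row `i`,
`2i+1` for an edge in row `i+1/2`. -/
def rowIdx : HPos → ℕ
  | .box i _ => 2 * i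
  | .edge i _ => 2 * i + 1

/-- The column of a position. -/
def col : HPos → ℕ
  | .box _ j => j
  | .edge _ j => j

/-- `p` is weakly northeast of `q`: weakly above and weakly to the right. -/
def NorthEastOf (p q : HPos) : Prop := p.rowIdx ≤ q.rowIdx ∧ q.col ≤ p.col

/-- `p` is read no later than `q` in the column reading order (columns right to
left, each column top to bottom); equivalently, every label at `p` is read by
the prefix `w_c|_q` of the column reading word ending after position `q`. -/
def colLE (p q : HPos) : Prop := q.col < p.col ∨ (p.col = q.col ∧ p.rowIdx ≤ q.rowIdx)

/-- `p` is read no later than `q` in the row reading order (rows top to bottom,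
each row right to left); equivalently, every label at `p` is read by the
prefix `w_r|_q` of the row reading word ending after position `q`. -/
def rowLE (p q : HPos) : Prop := p.rowIdx < q.rowIdx ∨ (p.rowIdx = q.rowIdx ∧ q.col ≤ p.col)

end HPos

/-- `p` is a valid (box or edge) position of the skew shape `ν/λ`. -/
def IsPos (lam nu : NatPartition) : HPos → Prop
  | .box i j => IsBox lam nu i j
  | .edge i j => IsEdge lam nu i j

/-- The tableau `T` carries the label `ℓ` at the position `p`. -/
def EdgeTableau.HasLabel {lam mu nu : NatPartition} (T : EdgeTableau lam mu nu) :
    HPos → ℕ → Prop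
  | .box i j, ℓ => IsBox lam nu i j ∧ T.box i j = ℓ
  | .edge i j, ℓ => ℓ ∈ T.edge i j

/-! ### The statistics `r_k^i(T)`, `r_k^{i+1/2}(T)` and conditions (A)–(F) -/

/-- `r_k^i(T)`: the number of box labels `k` in row `i` of `T`. -/
noncomputable def EdgeTableau.rbox {lam mu nu : NatPartition} (T : EdgeTableau lam mu nu)
    (k i : ℕ) : ℕ :=
  Set.ncard {j : ℕ | IsBox lam nu i j ∧ T.box i j = k}

/-- `r_k^{i+1/2}(T)`: the number of edge labels `k` on the edges `(i+1/2, j)` of `T`. -/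
noncomputable def EdgeTableau.redge {lam mu nu : NatPartition} (T : EdgeTableau lam mu nu)
    (k i : ℕ) : ℕ :=
  Set.ncard {j : ℕ | k ∈ T.edge i j}

open Finset in
/-- Conditions (A)–(F) of Adve–Robichaux–Yong for the triple `(λ,μ,ν)` on the real
tuple `(r_k^i, r_k^{i+1/2})_{1 ≤ k ≤ ℓ(μ), 1 ≤ i ≤ ℓ(ν)}`, encoded as a pair of
functions `rb re : ℕ → ℕ → ℝ` (`rb k i = r_k^i`, `re k i = r_k^{i+1/2}`) that
vanish outside the index range (which also encodes the paper's conventions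
`r_{ℓ(μ)+1}^i = r_{ℓ(μ)+1}^{i+1/2} = 0` and `r_k^{ℓ(ν)+1} = 0`).
Membership in the polytope `P(λ,μ,ν)` is exactly this predicate. -/
def SatisfiesAF (lam mu nu : NatPartition) (rb re : ℕ → ℕ → ℝ) : Prop :=
  -- the tuple is indexed by `1 ≤ k ≤ ℓ(μ)`, `1 ≤ i ≤ ℓ(ν)`; it vanishes elsewhere
  (∀ k i, ¬(1 ≤ k ∧ k ≤ mu.len ∧ 1 ≤ i ∧ i ≤ nu.len) → rb k i = 0 ∧ re k i = 0) ∧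
  -- (A) nonnegativity
  (∀ k i, 0 ≤ rb k i ∧ 0 ≤ re k i) ∧
  -- (B) shape constraints
  (∀ i, 1 ≤ i → (lam.part i : ℝ) + ∑ k ∈ Icc 1 mu.len, rb k i = (nu.part i : ℝ)) ∧
  -- (C) content constraints
  (∀ k, 1 ≤ k → ∑ i ∈ Icc 1 nu.len, (rb k i + re k i) = (mu.part k : ℝ)) ∧
  -- (D) gap constraints
  (∀ k i, 1 ≤ k → k ≤ mu.len → 1 ≤ i → i ≤ nu.len →
    re k i ≤ ((lam.part i : ℝ) + ∑ k' ∈ Ico 1 k, rb k' i)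
      - ((lam.part (i+1) : ℝ) + ∑ k' ∈ Icc 1 k, rb k' (i+1))) ∧
  -- (E) no label is too high
  (∀ k i, i < k → rb k i = 0 ∧ re k i = 0) ∧
  -- (F) reverse lattice word constraints
  (∀ k i, 1 ≤ k → k ≤ mu.len → 1 ≤ i → i ≤ nu.len →
    rb (k+1) i + ∑ i' ∈ Ico 1 i, (rb (k+1) i' + re (k+1) i')
      ≤ ∑ i' ∈ Ico 1 i, (rb k i' + re k i'))

/-! ### Plus diagrams and (factorial) Schur polynomials -/

/-- The initial diagram of `λ` in the `n`-row grid: a `+` in each position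
`(i,j)` with `1 ≤ i ≤ n`, `1 ≤ j ≤ λ_i`. -/
def initialDiagram (n : ℕ) (lam : NatPartition) : Finset (ℕ × ℕ) :=
  (Finset.Icc 1 n ×ˢ Finset.Icc 1 (lam.part 1)).filter fun q => q.2 ≤ lam.part q.1

/-- A local move in the `n × m` grid: a `+` at `(i,j)` moves to `(i+1,j+1)`,
provided `(i+1,j+1)` lies in the grid and `(i,j+1)`, `(i+1,j)`, `(i+1,j+1)`
carry no `+`. -/
def IsLocalMove (n m : ℕ) (P Q : Finset (ℕ × ℕ)) : Prop :=
  ∃ i j, (i, j) ∈ P ∧ i + 1 ≤ n ∧ j + 1 ≤ m ∧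
    (i, j+1) ∉ P ∧ (i+1, j) ∉ P ∧ (i+1, j+1) ∉ P ∧
    Q = insert (i+1, j+1) (P.erase (i, j))

/-- `Plus(λ)`: all configurations obtainable from the initial diagram of `λ`
in the `n × m` grid by finite sequences of local moves. -/
def PlusSet (n m : ℕ) (lam : NatPartition) : Set (Finset (ℕ × ℕ)) :=
  {P | Relation.ReflTransGen (IsLocalMove n m) (initialDiagram n lam) P}

open MvPolynomial in
/-- `wt_{x,y}(P) = ∏_{(i,j) ∈ P} (x_i - y_j)`, in `ℤ[x_1, x_2, …, y_1, y_2, …]`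
(the variable `Sum.inl i` is `x_i`, and `Sum.inr j` is `y_j`). -/
noncomputable def wtxy (P : Finset (ℕ × ℕ)) : MvPolynomial (ℕ ⊕ ℕ) ℤ :=
  ∏ q ∈ P, (X (Sum.inl q.1) - X (Sum.inr q.2))

open MvPolynomial in
/-- `wt_x(P) = ∏_i x_i^{a_i(P)}`, where `a_i(P)` is the number of `+`'s in row `i`. -/
noncomputable def wtx (P : Finset (ℕ × ℕ)) : MvPolynomial (ℕ ⊕ ℕ) ℤ :=
  ∏ q ∈ P, X (Sum.inl q.1)

/-- The factorial Schur polynomial `s_λ(X;Y) = Σ_{P ∈ Plus(λ)} wt_{x,y}(P)`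
(computed in the `n × m` grid). -/
noncomputable def factorialSchur (n m : ℕ) (lam : NatPartition) : MvPolynomial (ℕ ⊕ ℕ) ℤ :=
  ∑ᶠ P ∈ PlusSet n m lam, wtxy P

/-- The Schur polynomial `s_λ(X) = Σ_{P ∈ Plus(λ)} wt_x(P)`
(computed in the `n × m` grid). -/
noncomputable def schurPoly (n m : ℕ) (lam : NatPartition) : MvPolynomial (ℕ ⊕ ℕ) ℤ :=
  ∑ᶠ P ∈ PlusSet n m lam, wtx P

open MvPolynomial in
/-- The substitution `y_j = 0` for all `j` (keeping the `x`-variables). -/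
noncomputable def setYtoZero : MvPolynomial (ℕ ⊕ ℕ) ℤ →+* MvPolynomial (ℕ ⊕ ℕ) ℤ :=
  (aeval (Sum.elim (fun i => (X (Sum.inl i) : MvPolynomial (ℕ ⊕ ℕ) ℤ)) fun _ => 0)).toRingHom

open MvPolynomial in
/-- Interpret a polynomial in `ℤ[y_1, y_2, …]` inside `ℤ[x_1, …, y_1, …]`. -/
noncomputable def yPoly (p : MvPolynomial ℕ ℤ) : MvPolynomial (ℕ ⊕ ℕ) ℤ :=
  rename Sum.inr p

open MvPolynomial Finsupp

noncomputable def rowvec (P : Finset (ℕ × ℕ)) : ℕ →₀ ℕ := ∑ q ∈ P, Finsupp.single q.1 1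

lemma rowvec_apply (P : Finset (ℕ × ℕ)) (i : ℕ) :
    rowvec P i = (P.filter fun q => q.1 = i).card := by
  classical
  rw [rowvec, Finset.sum_apply', Finset.card_filter]
  refine Finset.sum_congr rfl fun q _ => ?_
  rw [Finsupp.single_apply]

lemma degree_rowvec (P : Finset (ℕ × ℕ)) : (rowvec P).degree = P.card := by
  classical
  rw [Finsupp.degree_eq_weight_one, rowvec, map_sum]
  rw [Finset.card_eq_sum_ones]
  refine Finset.sum_congr rfl fun q _ => ?_
  rw [Finsupp.weight_apply, Finsupp.sum_single_index] <;> simp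

def rcount (t : ℕ) (P : Finset (ℕ × ℕ)) : ℕ := (P.filter fun q => q.1 ≤ t).card

lemma rcount_eq_sum_rowvec (t : ℕ) (P : Finset (ℕ × ℕ)) :
    rcount t P = ∑ i ∈ Finset.range (t + 1), rowvec P i := by
  classical
  simp only [rcount, rowvec_apply, Finset.card_filter]
  rw [Finset.sum_comm]
  refine Finset.sum_congr rfl fun q _ => ?_
  rw [show (∑ i ∈ Finset.range (t+1), if q.1 = i then (1:ℕ) else 0) = if q.1 ∈ Finset.range (t+1) then 1 else 0 from Finset.sum_ite_eq (Finset.range (t+1)) q.1 (fun _ => (1:ℕ))]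
  simp [Nat.lt_succ_iff]




lemma move_card {n m : ℕ} {P Q : Finset (ℕ × ℕ)} (h : IsLocalMove n m P Q) :
    Q.card = P.card := by
  classical
  obtain ⟨i, j, hij, hin, hjm, h1, h2, h3, rfl⟩ := h
  rw [Finset.card_insert_of_notMem, Finset.card_erase_of_mem hij]
  · have : 1 ≤ P.card := Finset.card_pos.2 ⟨_, hij⟩
    omega
  · intro hmem; exact h3 (Finset.mem_of_mem_erase hmem)

lemma move_rcount {n m : ℕ} {P Q : Finset (ℕ × ℕ)} (h : IsLocalMove n m P Q) :
    (∀ t, rcount t Q ≤ rcount t P) ∧ ∃ t, rcount t Q < rcount t P := by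
  classical
  obtain ⟨i, j, hij, hin, hjm, h1, h2, h3, rfl⟩ := h
  have hmemf : ∀ t, i ≤ t → (i, j) ∈ (P.filter fun q => q.1 ≤ t) := fun t ht =>
    Finset.mem_filter.2 ⟨hij, ht⟩
  have key : ∀ t, rcount t (insert (i+1, j+1) (P.erase (i, j)))
      = if i + 1 ≤ t then rcount t P else if i ≤ t then rcount t P - 1 else rcount t P := by
    intro t
    unfold rcount
    rw [Finset.filter_insert, Finset.filter_erase]
    by_cases hc1 : i + 1 ≤ t
    · rw [if_pos hc1, if_pos hc1, Finset.card_insert_of_notMem,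
        Finset.card_erase_of_mem (hmemf t (by omega))]
      · have h4 : 1 ≤ (P.filter fun q => q.1 ≤ t).card :=
          Finset.card_pos.2 ⟨_, hmemf t (by omega)⟩
        omega
      · intro hmem
        exact h3 (Finset.mem_filter.1 (Finset.mem_of_mem_erase hmem)).1
    · rw [if_neg hc1, if_neg hc1]
      by_cases hc2 : i ≤ t
      · rw [if_pos hc2, Finset.card_erase_of_mem (hmemf t hc2)]
      · rw [if_neg hc2, Finset.erase_eq_of_notMem]
        intro hmem
        have := (Finset.mem_filter.1 hmem).2
        simp only at this
        omega
  constructor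
  · intro t
    rw [key t]
    split_ifs <;> omega
  · refine ⟨i, ?_⟩
    rw [key i]
    have h4 : 1 ≤ rcount i P := Finset.card_pos.2 ⟨_, hmemf i le_rfl⟩
    simp only [Nat.add_one_le_iff, lt_irrefl, if_false, le_refl, if_true]
    omega

lemma initial_subset_grid (n m : ℕ) (lam : NatPartition) (hm : lam.part 1 ≤ m) :
    initialDiagram n lam ⊆ Finset.Icc 1 n ×ˢ Finset.Icc 1 m := by
  intro q hq
  have h1 := Finset.mem_filter.1 hq
  have h2 := Finset.mem_product.1 h1.1
  refine Finset.mem_product.2 ⟨h2.1, ?_⟩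
  have := Finset.mem_Icc.1 h2.2
  exact Finset.mem_Icc.2 ⟨this.1, le_trans this.2 hm⟩

lemma plus_grid {n m : ℕ} {lam : NatPartition} (hm : lam.part 1 ≤ m) {P : Finset (ℕ × ℕ)}
    (hP : P ∈ PlusSet n m lam) : P ⊆ Finset.Icc 1 n ×ˢ Finset.Icc 1 m := by
  induction hP with
  | refl => exact initial_subset_grid n m lam hm
  | tail _ hmove ih =>
    obtain ⟨i, j, hij, hin, hjm, h1, h2, h3, rfl⟩ := hmove
    intro q hq
    rcases Finset.mem_insert.1 hq with rfl | hq'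
    · exact Finset.mem_product.2 ⟨Finset.mem_Icc.2 ⟨by omega, hin⟩, Finset.mem_Icc.2 ⟨by omega, hjm⟩⟩
    · exact ih (Finset.mem_of_mem_erase hq')

lemma plus_card {n m : ℕ} {lam : NatPartition} {P : Finset (ℕ × ℕ)}
    (hP : P ∈ PlusSet n m lam) : P.card = (initialDiagram n lam).card := by
  induction hP with
  | refl => rfl
  | tail _ hmove ih => rw [move_card hmove, ih]

lemma plus_rcount {n m : ℕ} {lam : NatPartition} {P : Finset (ℕ × ℕ)}
    (hP : P ∈ PlusSet n m lam) :
    (∀ t, rcount t P ≤ rcount t (initialDiagram n lam)) ∧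
      (P = initialDiagram n lam ∨ ∃ t, rcount t P < rcount t (initialDiagram n lam)) := by
  induction hP with
  | refl => exact ⟨fun t => le_rfl, Or.inl rfl⟩
  | tail _ hmove ih =>
    obtain ⟨hle, hstr⟩ := move_rcount hmove
    refine ⟨fun t => le_trans (hle t) (ih.1 t), Or.inr ?_⟩
    obtain ⟨t, ht⟩ := hstr
    exact ⟨t, lt_of_lt_of_le ht (ih.1 t)⟩

lemma plusSet_finite (n m : ℕ) (lam : NatPartition) (hm : lam.part 1 ≤ m) :
    (PlusSet n m lam).Finite := by
  classical
  apply Set.Finite.subset (Finset.finite_toSet (Finset.Icc 1 n ×ˢ Finset.Icc 1 m).powerset)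
  intro P hP
  exact Finset.mem_coe.2 (Finset.mem_powerset.2 (plus_grid hm hP))

lemma part_le_part_one (lam : NatPartition) (i : ℕ) : lam.part i ≤ lam.part 1 :=
  lam.antitone' (Nat.zero_le _)

lemma rowvec_initial (n : ℕ) (lam : NatPartition) (i : ℕ) :
    rowvec (initialDiagram n lam) i = if 1 ≤ i ∧ i ≤ n then lam.part i else 0 := by
  classical
  rw [rowvec_apply]
  split_ifs with hi
  · rw [show (initialDiagram n lam).filter (fun q => q.1 = i)
        = {i} ×ˢ Finset.Icc 1 (lam.part i) from ?_]
    · simp [Nat.card_Icc]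
    · ext q
      simp only [Finset.mem_filter, initialDiagram, Finset.mem_product, Finset.mem_Icc,
        Finset.mem_singleton]
      constructor
      · rintro ⟨⟨⟨hq1, hq2⟩, hq3⟩, hq4⟩
        subst hq4
        exact ⟨rfl, hq2.1, hq3⟩
      · rintro ⟨hq1, hq2, hq3⟩
        subst hq1
        exact ⟨⟨⟨⟨hi.1, hi.2⟩, ⟨hq2, le_trans hq3 (part_le_part_one lam q.1)⟩⟩, hq3⟩, rfl⟩
  · rw [Finset.filter_eq_empty_iff.2, Finset.card_empty]
    intro q hq
    have h1 := Finset.mem_Icc.1 (Finset.mem_product.1 (Finset.mem_filter.1 hq).1).1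
    intro hq1
    rw [hq1] at h1
    omega

lemma rcount_initial {n t : ℕ} (ht : t ≤ n) (lam : NatPartition) :
    rcount t (initialDiagram n lam) = ∑ s ∈ Finset.range t, lam.toFun s := by
  rw [rcount_eq_sum_rowvec, Finset.sum_range_succ']
  simp only [rowvec_initial]
  rw [if_neg (by omega)]
  rw [add_zero]
  refine Finset.sum_congr rfl fun s hs => ?_
  have hmem := Finset.mem_range.1 hs
  rw [if_pos ⟨by omega, by omega⟩]
  rfl

lemma rcount_top {n m : ℕ} (P : Finset (ℕ × ℕ)) (hP : P ⊆ Finset.Icc 1 n ×ˢ Finset.Icc 1 m) :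
    rcount n P = P.card := by
  unfold rcount
  rw [Finset.filter_true_of_mem]
  intro q hq
  exact (Finset.mem_Icc.1 (Finset.mem_product.1 (hP hq)).1).2

lemma toFun_eq_zero_of_len_le {n : ℕ} {lam : NatPartition} (h : lam.len ≤ n) {i : ℕ}
    (hi : n ≤ i) : lam.toFun i = 0 := by
  by_contra hne
  have hsub : (Set.Iic i) ⊆ {j : ℕ | lam.toFun j ≠ 0} := by
    intro j hj hz
    have := lam.antitone' (Set.mem_Iic.1 hj)
    omega
  have hfin : {j : ℕ | lam.toFun j ≠ 0}.Finite := by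
    obtain ⟨N, hN⟩ := lam.eventually_zero'
    apply Set.Finite.subset (Set.finite_Iio N)
    intro j hj
    by_contra hj'
    exact hj (hN j (by simpa [Set.mem_Iio, not_lt] using hj'))
  have hle := Set.ncard_le_ncard hsub hfin
  rw [← Finset.coe_Iic, Set.ncard_coe_finset, Nat.card_Iic] at hle
  have : lam.len = Set.ncard {j : ℕ | lam.toFun j ≠ 0} := rfl
  omega

lemma NatPartition.ext' {a b : NatPartition} (h : a.toFun = b.toFun) : a = b := by
  cases a; cases b; cases h; rfl




lemma td_factor (a b : ℕ) :
    (X a - C (X b) : MvPolynomial ℕ (MvPolynomial ℕ ℤ)).totalDegree ≤ 1 := by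
  rw [sub_eq_add_neg]
  refine le_trans (totalDegree_add _ _) ?_
  rw [totalDegree_neg, totalDegree_C]
  simp [totalDegree_X]

lemma td_prod (P : Finset (ℕ × ℕ)) :
    (∏ q ∈ P, (X q.1 - C (X q.2) : MvPolynomial ℕ (MvPolynomial ℕ ℤ))).totalDegree
      ≤ P.card := by
  refine le_trans (totalDegree_finset_prod _ _) ?_
  rw [Finset.card_eq_sum_ones]
  exact Finset.sum_le_sum fun q _ => td_factor q.1 q.2

lemma coeff_prod_zero {P : Finset (ℕ × ℕ)} {e : ℕ →₀ ℕ} (h : P.card < e.degree) :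
    MvPolynomial.coeff e (∏ q ∈ P, (X q.1 - C (X q.2) : MvPolynomial ℕ (MvPolynomial ℕ ℤ)))
      = 0 :=
  coeff_eq_zero_of_totalDegree_lt (lt_of_le_of_lt (td_prod P) h)

lemma coeff_prod_factors (P : Finset (ℕ × ℕ)) :
    ∀ e : ℕ →₀ ℕ, P.card ≤ e.degree →
      MvPolynomial.coeff e (∏ q ∈ P, (X q.1 - C (X q.2) : MvPolynomial ℕ (MvPolynomial ℕ ℤ)))
        = if e = rowvec P then 1 else 0 := by
  classical
  induction P using Finset.induction_on with
  | empty =>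
    intro e _
    rw [Finset.prod_empty, coeff_one]
    have : rowvec (∅ : Finset (ℕ × ℕ)) = 0 := by simp [rowvec]
    rw [this]
    by_cases h : e = 0
    · subst h; simp
    · rw [if_neg h, if_neg (fun h' => h h'.symm)]
  | insert _ _ ha ih =>
    rename_i a P
    intro e he
    rw [Finset.card_insert_of_notMem ha] at he
    rw [Finset.prod_insert ha, sub_mul]
    have hrv : rowvec (insert a P) = Finsupp.single a.1 1 + rowvec P := by
      rw [rowvec, Finset.sum_insert ha]; rfl
    have hCterm : MvPolynomial.coeff e
        ((C (X a.2) : MvPolynomial ℕ (MvPolynomial ℕ ℤ)) * ∏ q ∈ P, (X q.1 - C (X q.2))) = 0 := by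
      rw [coeff_C_mul, coeff_prod_zero (by omega), mul_zero]
    rw [coeff_sub, hCterm, sub_zero, mul_comm, coeff_mul_X']
    by_cases hsupp : a.1 ∈ e.support
    · rw [if_pos hsupp]
      have h1 : (1:ℕ) ≤ e a.1 := by
        have := Finsupp.mem_support_iff.1 hsupp
        omega
      have hsingle_le : Finsupp.single a.1 1 ≤ e := Finsupp.single_le_iff.2 h1
      have hcancel : e - Finsupp.single a.1 1 + Finsupp.single a.1 1 = e :=
        tsub_add_cancel_of_le hsingle_le
      have hdeg : (e - Finsupp.single a.1 1).degree + 1 = e.degree := by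
        have := congrArg Finsupp.degree hcancel
        rw [Finsupp.degree_eq_weight_one, map_add] at this
        rw [Finsupp.degree_eq_weight_one]
        rw [← this]
        congr 1
        rw [Finsupp.weight_apply, Finsupp.sum_single_index] <;> simp
      rw [ih _ (by omega)]
      congr 1
      rw [eq_iff_iff]
      constructor
      · intro h
        rw [hrv, ← h, add_comm, hcancel]
      · intro h
        rw [h, hrv, add_comm, add_tsub_cancel_right]
    · rw [if_neg hsupp, if_neg]
      intro heq
      apply hsupp
      rw [heq, hrv]
      rw [Finsupp.mem_support_iff]
      simp [Finsupp.single_apply]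

lemma E_wtxy (P : Finset (ℕ × ℕ)) :
    sumToIter ℤ ℕ ℕ (wtxy P) = ∏ q ∈ P, (X q.1 - C (X q.2)) := by
  rw [wtxy, map_prod]
  exact Finset.prod_congr rfl fun q _ => by rw [map_sub, sumToIter_Xl, sumToIter_Xr]

lemma E_yPoly (q : MvPolynomial ℕ ℤ) : sumToIter ℤ ℕ ℕ (yPoly q) = C q := by
  induction q using MvPolynomial.induction_on with
  | C a => rw [yPoly, rename_C, sumToIter_C]
  | add p q hp hq =>
    have h : yPoly (p + q) = yPoly p + yPoly q := by simp [yPoly, map_add]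
    rw [h, map_add, hp, hq, map_add]
  | mul_X p i hp =>
    have h : yPoly (p * X i) = yPoly p * yPoly (X i) := by simp [yPoly]
    rw [h, map_mul, hp, yPoly, rename_X, sumToIter_Xr, map_mul]


/-- **Linear independence of the factorial Schur polynomials** over `ℤ[Y]`.
If a finitely supported family `(p_λ)` of polynomials in the `y`-variables,
indexed by partitions with at most `n` parts, satisfies
`Σ_λ p_λ · s_λ(X;Y) = 0` (with `s_λ(X;Y)` computed in the grid with
`m(λ) = n + λ_1` columns), then every `p_λ` is zero. -/
theorem factorialSchur_linearIndependent (n : ℕ) (hn : 1 ≤ n)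
    (p : NatPartition → MvPolynomial ℕ ℤ)
    (hsupp : ∀ l : NatPartition, ¬ l.len ≤ n → p l = 0)
    (hfin : {l : NatPartition | p l ≠ 0}.Finite)
    (hsum : ∑ᶠ l : NatPartition, yPoly (p l) * factorialSchur n (n + l.part 1) l = 0) :
    ∀ l : NatPartition, p l = 0 := by
  classical
  by_contra hne
  push_neg at hne
  obtain ⟨l0, hl0⟩ := hne
  set S : Finset NatPartition := hfin.toFinset with hSdef
  have hmemS : ∀ l, l ∈ S ↔ p l ≠ 0 := fun l => hfin.mem_toFinset
  have hS : S.Nonempty := ⟨l0, (hmemS l0).2 hl0⟩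
  obtain ⟨d, hd_mem, hd⟩ := S.exists_max_image (fun l => (initialDiagram n l).card) hS
  have hS' : (S.filter fun l => (initialDiagram n l).card = (initialDiagram n d).card).Nonempty :=
    ⟨d, Finset.mem_filter.2 ⟨hd_mem, rfl⟩⟩
  obtain ⟨lam, hlam_mem, hlam⟩ :=
    Finset.exists_max_image _ (fun l : NatPartition => toLex l.toFun) hS'
  have hlam_S : lam ∈ S := (Finset.mem_filter.1 hlam_mem).1
  have hlam_card : (initialDiagram n lam).card = (initialDiagram n d).card :=
    (Finset.mem_filter.1 hlam_mem).2
  have hlen : ∀ l ∈ S, l.len ≤ n := fun l hl => by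
    by_contra h; exact (hmemS l).1 hl (hsupp l h)
  set dl : ℕ →₀ ℕ := rowvec (initialDiagram n lam) with hdl
  have hdl_deg : dl.degree = (initialDiagram n lam).card := degree_rowvec _
  have key : ∀ l ∈ S, MvPolynomial.coeff dl (sumToIter ℤ ℕ ℕ (factorialSchur n (n + l.part 1) l))
      = if l = lam then 1 else 0 := by
    intro l hl
    have hm : l.part 1 ≤ n + l.part 1 := by omega
    have hfinP := plusSet_finite n (n + l.part 1) l hm
    have hfs : factorialSchur n (n + l.part 1) l = ∑ P ∈ hfinP.toFinset, wtxy P := by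
      rw [factorialSchur]
      exact finsum_mem_eq_finite_toFinset_sum wtxy hfinP
    rw [hfs, map_sum, MvPolynomial.coeff_sum]
    have hcard : ∀ P ∈ hfinP.toFinset, P.card ≤ dl.degree := by
      intro P hP
      rw [hdl_deg, hlam_card, plus_card (hfinP.mem_toFinset.1 hP)]
      exact hd l hl
    rw [Finset.sum_congr rfl (fun P hP => by
      rw [E_wtxy, coeff_prod_factors P dl (hcard P hP)])]
    by_cases hll : l = lam
    · subst hll
      rw [if_pos rfl, Finset.sum_eq_single_of_mem (initialDiagram n l)
        (hfinP.mem_toFinset.2 Relation.ReflTransGen.refl)]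
      · rw [if_pos hdl]
      · intro P hP hPne
        rw [if_neg]
        intro hEq
        have hP' := hfinP.mem_toFinset.1 hP
        have hPr : rowvec P = rowvec (initialDiagram n l) := (hdl.symm.trans hEq).symm
        have hrc : ∀ t, rcount t P = rcount t (initialDiagram n l) := fun t => by
          rw [rcount_eq_sum_rowvec, rcount_eq_sum_rowvec, hPr]
        rcases (plus_rcount hP').2 with hinit | ⟨t, ht⟩
        · exact hPne hinit
        · rw [hrc t] at ht; exact lt_irrefl _ ht
    · rw [if_neg hll]
      apply Finset.sum_eq_zero
      intro P hP
      rw [if_neg]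
      intro hEq
      have hP' := hfinP.mem_toFinset.1 hP
      have hPr : rowvec P = rowvec (initialDiagram n lam) := (hdl.symm.trans hEq).symm
      have hrcP : ∀ t, rcount t P = rcount t (initialDiagram n lam) := fun t => by
        rw [rcount_eq_sum_rowvec, rcount_eq_sum_rowvec, hPr]
      by_cases hcardeq : (initialDiagram n l).card = (initialDiagram n lam).card
      · have hl' : l ∈ S.filter fun l => (initialDiagram n l).card = (initialDiagram n d).card :=
          Finset.mem_filter.2 ⟨hl, by rw [hcardeq, hlam_card]⟩
        have hne' : l.toFun ≠ lam.toFun := fun h => hll (NatPartition.ext' h)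
        have hlex : toLex l.toFun < toLex lam.toFun :=
          lt_of_le_of_ne (hlam l hl') fun h => hne' (toLex.injective h)
        have hlex' : Pi.Lex (· < ·) (@fun _ => (· < ·)) l.toFun lam.toFun := hlex
        obtain ⟨t0, hagree, hlt0⟩ := hlex'
        have ht0n : t0 < n := by
          by_contra h
          rw [toFun_eq_zero_of_len_le (hlen lam hlam_S) (not_lt.1 h)] at hlt0
          omega
        have h1 : rcount (t0+1) P ≤ rcount (t0+1) (initialDiagram n l) := (plus_rcount hP').1 _
        rw [hrcP, rcount_initial (by omega), rcount_initial (by omega)] at h1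
        have h2 : ∑ s ∈ Finset.range t0, lam.toFun s = ∑ s ∈ Finset.range t0, l.toFun s :=
          (Finset.sum_congr rfl fun s hs => (hagree s (Finset.mem_range.1 hs))).symm
        rw [Finset.sum_range_succ, Finset.sum_range_succ, h2] at h1
        omega
      · have h1 : rcount n P = P.card := rcount_top P (plus_grid hm hP')
        have h2 : rcount n (initialDiagram n lam) = (initialDiagram n lam).card :=
          rcount_top _ (initial_subset_grid n _ lam le_rfl)
        have h3 := plus_card hP'
        rw [hrcP n, h2] at h1
        exact hcardeq (by omega)
  have hrw : ∑ᶠ l : NatPartition, yPoly (p l) * factorialSchur n (n + l.part 1) l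
      = ∑ l ∈ S, yPoly (p l) * factorialSchur n (n + l.part 1) l := by
    refine finsum_eq_sum_of_support_subset _ ?_
    intro l hl
    rw [Function.mem_support] at hl
    have hpl : p l ≠ 0 := by
      intro h
      apply hl
      rw [h, yPoly, map_zero, zero_mul]
    rw [hSdef, Set.Finite.coe_toFinset]
    exact hpl
  rw [hrw] at hsum
  have h0 := congrArg (fun F => MvPolynomial.coeff dl (sumToIter ℤ ℕ ℕ F)) hsum
  simp only [map_sum, map_mul, E_yPoly, map_zero, MvPolynomial.coeff_sum, coeff_C_mul,
    MvPolynomial.coeff_zero] at h0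
  rw [Finset.sum_congr rfl (fun l hl => by rw [key l hl])] at h0
  rw [Finset.sum_eq_single_of_mem lam hlam_S
    (fun b _ hbne => by rw [if_neg hbne, mul_zero])] at h0
  rw [if_pos rfl, mul_one] at h0
  exact (hmemS lam).1 hlam_S h0
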